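/- arXiv:2412.09243 — 3 statements merged into one kernel-verified Lean document; each statement's English description precedes it below -/
import Mathlib

section
/- Let I be a finite nonempty set of items, p and q probability distributions on I with q(y) > 0 for all y, π_ref a positive function on I, and β > 0. Define for a probability distribution π on I the loss L(π) = -Σ_{y_w} Σ_{y_l} p(y_w) q(y_l) · log σ(β·log(π(y_w)/π_ref(y_w)) − β·log(π(y_l)/π_ref(y_l))), where σ(z) = 1/(1+e^{−z}). Then the distribution π*(y) ∝ π_ref(y)·(p(y)/q(y))^{1/β} is a critical point of L over the probability simplex (i.e., the gradient of L at π* is constant across coordinates where π* > 0). -/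
/-!
Writing `f = β log (π / π_ref)` for the implicit reward, the loss is the pairwise logistic loss
`-∑ p(w) q(l) log σ(f w - f l)`, whose directional derivative along `d` is
`-∑ p(w) q(l) σ(f l - f w) (d w - d l)`. At `π*` the reward is `log (p / q)` up to the constant
`-β log Z`, and then `σ(f l - f w) = r l / (r l + r w)` with `r = p / q`, so the weight
`p(w) q(l) σ(f l - f w) = p(w) p(l) / (r w + r l)` is symmetric in `w, l`: the sum against the
antisymmetric `d w - d l` vanishes, so every partial derivative at `π*` is `0`.
-/

open Finset
open Real (log exp sigmoid)

namespace Real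

lemma hasDerivAt_log_sigmoid (x : ℝ) :
    HasDerivAt (fun x => log (sigmoid x)) (sigmoid (-x)) x := by
  convert (hasDerivAt_sigmoid x).log (sigmoid_pos x).ne' using 1
  rw [sigmoid_neg]
  field [(sigmoid_pos x).ne']

lemma sigmoid_log_sub_log {a b : ℝ} (ha : 0 < a) (hb : 0 < b) :
    sigmoid (log a - log b) = a / (a + b) := by
  rw [sigmoid_def, neg_sub, exp_sub, exp_log ha, exp_log hb]
  field

end Real

lemma Finset.sum_sum_mul_sub_eq_zero_of_symm {ι R : Type*} [CommRing R] (s : Finset ι)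
    {K : ι → ι → R} (hK : ∀ i j, K i j = K j i) (a : ι → R) :
    ∑ i ∈ s, ∑ j ∈ s, K i j * (a i - a j) = 0 := by
  simp only [mul_sub, sum_sub_distrib]
  rw [sub_eq_zero, sum_comm]
  simp only [hK]

section Pairwise

variable {I : Type*} [Fintype I]

noncomputable def pairwiseLogisticLoss (p q f : I → ℝ) : ℝ :=
  -∑ w, ∑ l, p w * q l * log (sigmoid (f w - f l))

lemma hasDerivAt_pairwiseLogisticLoss (p q : I → ℝ) {g : ℝ → I → ℝ} {g' : I → ℝ} {t : ℝ}
    (hg : ∀ w, HasDerivAt (fun t => g t w) (g' w) t) :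
    HasDerivAt (fun t => pairwiseLogisticLoss p q (g t))
      (-∑ w, ∑ l, p w * q l * (sigmoid (g t l - g t w) * (g' w - g' l))) t := by
  refine (HasDerivAt.fun_sum fun w _ => HasDerivAt.fun_sum fun l _ => ?_).neg
  have hpair := (Real.hasDerivAt_log_sigmoid (g t w - g t l)).comp t ((hg w).sub (hg l))
  rw [neg_sub] at hpair
  exact hpair.const_mul _

lemma sum_sum_sigmoid_mul_sub_eq_zero {p q f : I → ℝ} (hp : ∀ w, 0 < p w) (hq : ∀ w, 0 < q w)
    {C : ℝ} (hf : ∀ w, f w = log (p w / q w) + C) (d : I → ℝ) :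
    ∑ w, ∑ l, p w * q l * (sigmoid (f l - f w) * (d w - d l)) = 0 := by
  have hr : ∀ w, 0 < p w / q w := fun w => div_pos (hp w) (hq w)
  have hweight : ∀ w l, p w * q l * sigmoid (f l - f w) = p w * p l / (p l / q l + p w / q w) := by
    intro w l
    rw [hf, hf, add_sub_add_right_eq_sub, Real.sigmoid_log_sub_log (hr l) (hr w)]
    field [(hq l).ne']
  simp only [← mul_assoc, hweight]
  refine sum_sum_mul_sub_eq_zero_of_symm _ (fun w l => ?_) d
  rw [mul_comm (p w), add_comm]

end Pairwise

section DPO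

variable {I : Type*}

noncomputable def dpoReward (πref : I → ℝ) (β : ℝ) (π : I → ℝ) (y : I) : ℝ :=
  β * log (π y / πref y)

lemma hasDerivAt_dpoReward_update [DecidableEq I] (πref : I → ℝ) (β : ℝ) {π : I → ℝ}
    (hπ : ∀ w, π w ≠ 0) (href : ∀ w, πref w ≠ 0) (y w : I) :
    HasDerivAt (fun t => dpoReward πref β (Function.update π y t) w)
      (β * (Pi.single y 1 : I → ℝ) w / π w) (π y) := by
  have hupdate := hasDerivAt_pi.mp (hasDerivAt_update π y (π y)) w
  have hlog := ((hupdate.div_const (πref w)).log (by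
    simpa only [Function.update_eq_self] using div_ne_zero (hπ w) (href w))).const_mul β
  rwa [Function.update_eq_self, div_div_div_cancel_right₀ (href w), ← mul_div_assoc] at hlog

lemma dpoReward_of_eq_rpow_div {p q πref π : I → ℝ} {β Z : ℝ} (hβ : β ≠ 0) (hZ : Z ≠ 0)
    (hp : ∀ w, 0 < p w) (hq : ∀ w, 0 < q w) (href : ∀ w, πref w ≠ 0)
    (hπ : ∀ w, π w = πref w * (p w / q w) ^ (1 / β) / Z) (w : I) :
    dpoReward πref β π w = log (p w / q w) + -β * log Z := by
  have hr : 0 < p w / q w := div_pos (hp w) (hq w)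
  rw [dpoReward, hπ, mul_div_assoc, mul_div_cancel_left₀ _ (href w),
    Real.log_div (Real.rpow_pos_of_pos hr _).ne' hZ, Real.log_rpow hr]
  field

end DPO

theorem stmt_0_general {I : Type*} [Fintype I] [DecidableEq I]
    (p q πref : I → ℝ) (β : ℝ)
    (hp : ∀ y, 0 < p y)
    (hq : ∀ y, 0 < q y)
    (href : ∀ y, 0 < πref y) (hβ : 0 < β) :
    let σ : ℝ → ℝ := fun z => 1 / (1 + Real.exp (-z))
    let L : (I → ℝ) → ℝ := fun π =>
      -∑ yw, ∑ yl, p yw * q yl *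
        Real.log (σ (β * Real.log (π yw / πref yw) - β * Real.log (π yl / πref yl)))
    let Z : ℝ := ∑ z, πref z * (p z / q z) ^ (1 / β)
    let πs : I → ℝ := fun y => πref y * (p y / q y) ^ (1 / β) / Z
    ∃ c : ℝ, ∀ y, 0 < πs y →
      HasDerivAt (fun t => L (Function.update πs y t)) c (πs y) := by
  intro σ L Z πs
  have hL : L = fun π => pairwiseLogisticLoss p q (dpoReward πref β π) := by
    simp only [L, σ, one_div]
    rfl
  refine ⟨0, fun y hy => ?_⟩
  have hZ : 0 < Z := (div_pos_iff_of_pos_left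
    (mul_pos (href y) (Real.rpow_pos_of_pos (div_pos (hp y) (hq y)) _))).mp hy
  have hπs : ∀ w, πs w ≠ 0 := fun w =>
    (div_pos (mul_pos (href w) (Real.rpow_pos_of_pos (div_pos (hp w) (hq w)) _)) hZ).ne'
  have href' : ∀ w, πref w ≠ 0 := fun w => (href w).ne'
  have hderiv := hasDerivAt_pairwiseLogisticLoss p q
    (hasDerivAt_dpoReward_update πref β hπs href' y)
  rw [Function.update_eq_self, sum_sum_sigmoid_mul_sub_eq_zero hp hq
    (dpoReward_of_eq_rpow_div hβ.ne' hZ.ne' hp hq href' fun _ => rfl), neg_zero] at hderiv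
  rwa [hL]

/-- DPO optimal policy (Theorem 1): π*(y) ∝ π_ref(y)·(p(y)/q(y))^{1/β} is a critical
point of the DPO loss over the probability simplex: the partial derivatives of L at π*
are constant across coordinates where π* > 0. -/
theorem stmt_0 {I : Type*} [Fintype I] [Nonempty I] [DecidableEq I]
    (p q πref : I → ℝ) (β : ℝ)
    (hp : ∀ y, 0 < p y) (hpsum : ∑ y, p y = 1)
    (hq : ∀ y, 0 < q y) (hqsum : ∑ y, q y = 1)
    (href : ∀ y, 0 < πref y) (hβ : 0 < β) :
    let σ : ℝ → ℝ := fun z => 1 / (1 + Real.exp (-z))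
    let L : (I → ℝ) → ℝ := fun π =>
      -∑ yw, ∑ yl, p yw * q yl *
        Real.log (σ (β * Real.log (π yw / πref yw) - β * Real.log (π yl / πref yl)))
    let Z : ℝ := ∑ z, πref z * (p z / q z) ^ (1 / β)
    let πs : I → ℝ := fun y => πref y * (p y / q y) ^ (1 / β) / Z
    ∃ c : ℝ, ∀ y, 0 < πs y →
      HasDerivAt (fun t => L (Function.update πs y t)) c (πs y) :=
  stmt_0_general p q πref β hp hq href hβ
end

section
/- Let I be a finite set, p a probability distribution on I, q the uniform distribution on I, π_ref positive on I, and 0 < β < 1. Define π*_β(y) = π_ref(y)·p(y)^{1/β} / Σ_{z} π_ref(z)·p(z)^{1/β}. If y₁, y₂ ∈ I satisfy p(y₁) > p(y₂) > 0 and π_ref(y₁) ≥ π_ref(y₂), then π*_β(y₁)/π*_β(y₂) > p(y₁)/p(y₂); that is, the optimal DPO policy amplifies the popularity ratio. -/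
/-- With uniform negatives and 0 < β < 1, the optimal DPO policy amplifies the
popularity ratio: π*_β(y₁)/π*_β(y₂) > p(y₁)/p(y₂). -/
theorem stmt_1 {I : Type*} [Fintype I] [Nonempty I]
    (p πref : I → ℝ) (β : ℝ)
    (hp : ∀ y, 0 ≤ p y) (hpsum : ∑ y, p y = 1)
    (href : ∀ y, 0 < πref y) (hβ0 : 0 < β) (hβ1 : β < 1)
    (y₁ y₂ : I) (h12 : p y₁ > p y₂) (h2 : p y₂ > 0)
    (hrefle : πref y₁ ≥ πref y₂) :
    let πs : I → ℝ := fun y => πref y * p y ^ (1 / β) / ∑ z, πref z * p z ^ (1 / β)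
    πs y₁ / πs y₂ > p y₁ / p y₂ := by
  intro πs
  have h1 : (0:ℝ) < p y₁ := lt_trans h2 h12
  have hc : (1:ℝ) < 1 / β := by rw [lt_div_iff₀ hβ0]; linarith
  have hS : 0 < ∑ z, πref z * p z ^ (1 / β) := by
    apply Finset.sum_pos'
    · intro z _
      exact mul_nonneg (le_of_lt (href z)) (Real.rpow_nonneg (hp z) _)
    · exact ⟨y₂, Finset.mem_univ _, mul_pos (href y₂) (Real.rpow_pos_of_pos h2 _)⟩
  have hrp1 : 0 < p y₁ ^ (1 / β) := Real.rpow_pos_of_pos h1 _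
  have hrp2 : 0 < p y₂ ^ (1 / β) := Real.rpow_pos_of_pos h2 _
  have hratio : πs y₁ / πs y₂ = πref y₁ * p y₁ ^ (1 / β) / (πref y₂ * p y₂ ^ (1 / β)) := by
    simp only [πs]
    field_simp
  rw [hratio]
  have key : p y₁ / p y₂ < p y₁ ^ (1 / β) / p y₂ ^ (1 / β) := by
    rw [← Real.div_rpow (le_of_lt h1) (le_of_lt h2)]
    have hx : (1:ℝ) < p y₁ / p y₂ := (one_lt_div h2).mpr h12
    calc p y₁ / p y₂ = (p y₁ / p y₂) ^ (1:ℝ) := (Real.rpow_one _).symm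
      _ < (p y₁ / p y₂) ^ (1 / β) := Real.rpow_lt_rpow_of_exponent_lt hx hc
  refine lt_of_lt_of_le key ?_
  rw [div_le_div_iff₀ hrp2 (mul_pos (href y₂) hrp2)]
  nlinarith [mul_nonneg (mul_nonneg (sub_nonneg.mpr hrefle) hrp1.le) hrp2.le]
end

section
/- Let I be a finite set and p a full-support probability distribution on I. For β > 0 define π_β(y) = p(y)^{1/β} / Σ_z p(z)^{1/β}. Then the Shannon entropy H(π_β) = −Σ_y π_β(y)·log π_β(y) is non-increasing as β decreases on (0, 1]; more precisely, H(π_β) is a non-decreasing function of β on (0, ∞). -/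
open Finset Real

/-- Gibbs' inequality: cross "negative entropy" is maximized at the distribution itself. -/
lemma gibbs_aux {I : Type*} [Fintype I] (a b : I → ℝ) (ha : ∀ y, 0 < a y)
    (hb : ∀ y, 0 < b y) (hsa : ∑ y, a y = 1) (hsb : ∑ y, b y = 1) :
    ∑ y, a y * Real.log (b y) ≤ ∑ y, a y * Real.log (a y) := by
  have key : ∀ y : I, a y * (Real.log (b y) - Real.log (a y)) ≤ b y - a y := by
    intro y
    have h1 := Real.log_le_sub_one_of_pos (div_pos (hb y) (ha y))
    rw [Real.log_div (hb y).ne' (ha y).ne'] at h1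
    have h2 := mul_le_mul_of_nonneg_left h1 (ha y).le
    calc a y * (Real.log (b y) - Real.log (a y)) ≤ a y * (b y / a y - 1) := h2
      _ = b y - a y := by rw [mul_sub, mul_div_cancel₀ _ (ha y).ne', mul_one]
  have hsum : ∑ y, a y * (Real.log (b y) - Real.log (a y)) ≤ 0 := by
    calc ∑ y, a y * (Real.log (b y) - Real.log (a y))
        ≤ ∑ y, (b y - a y) := Finset.sum_le_sum fun y _ => key y
      _ = 0 := by rw [Finset.sum_sub_distrib, hsa, hsb]; ring
  have : ∑ y, a y * (Real.log (b y) - Real.log (a y))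
      = ∑ y, a y * Real.log (b y) - ∑ y, a y * Real.log (a y) := by
    rw [← Finset.sum_sub_distrib]; congr 1; funext y; ring
  linarith [this ▸ hsum]

/-- Entropy decreases under escort transform with exponent r ≥ 1. -/
lemma escort_ent {I : Type*} [Fintype I] [Nonempty I] (q : I → ℝ)
    (hq : ∀ y, 0 < q y) (hsq : ∑ y, q y = 1) (r : ℝ) (hr : 1 ≤ r) :
    -∑ y, (q y ^ r / ∑ z, q z ^ r) * Real.log (q y ^ r / ∑ z, q z ^ r)
      ≤ -∑ y, q y * Real.log (q y) := by
  set Z : ℝ := ∑ z, q z ^ r with hZdef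
  have hZ : 0 < Z := Finset.sum_pos (fun z _ => Real.rpow_pos_of_pos (hq z) r)
    Finset.univ_nonempty
  set qr : I → ℝ := fun y => q y ^ r / Z with hqrdef
  have hqrpos : ∀ y, 0 < qr y := fun y => div_pos (Real.rpow_pos_of_pos (hq y) r) hZ
  have hsqr : ∑ y, qr y = 1 := by
    simp only [hqrdef]; rw [← Finset.sum_div]; exact div_self hZ.ne'
  have hlog : ∀ y, Real.log (qr y) = r * Real.log (q y) - Real.log Z := by
    intro y
    simp only [hqrdef]
    rw [Real.log_div (Real.rpow_pos_of_pos (hq y) r).ne' hZ.ne',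
      Real.log_rpow (hq y)]
  set E : ℝ := ∑ y, q y * Real.log (q y) with hE
  set Er : ℝ := ∑ y, qr y * Real.log (qr y) with hEr
  have hrpos : (0:ℝ) < r := lt_of_lt_of_le one_pos hr
  -- Gibbs with a = q, b = qr
  have g1 : r * E - Real.log Z ≤ E := by
    have := gibbs_aux q qr hq hqrpos hsq hsqr
    have hL : ∑ y, q y * Real.log (qr y) = r * E - Real.log Z := by
      calc ∑ y, q y * Real.log (qr y)
          = ∑ y, (r * (q y * Real.log (q y)) - Real.log Z * q y) :=
            Finset.sum_congr rfl fun y _ => by rw [hlog y]; ring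
        _ = r * E - Real.log Z := by
            rw [Finset.sum_sub_distrib, ← Finset.mul_sum, ← Finset.mul_sum, hsq,
              mul_one, hE]
    linarith [hL ▸ this]
  -- Gibbs with a = qr, b = q
  have g2 : Er + Real.log Z ≤ r * Er := by
    have := gibbs_aux qr q hqrpos hq hsqr hsq
    have hL : r * ∑ y, qr y * Real.log (q y) = Er + Real.log Z := by
      rw [Finset.mul_sum]
      calc ∑ y, r * (qr y * Real.log (q y))
          = ∑ y, (qr y * Real.log (qr y) + Real.log Z * qr y) :=
            Finset.sum_congr rfl fun y _ => by rw [hlog y]; ring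
        _ = Er + Real.log Z := by
            rw [Finset.sum_add_distrib, ← Finset.mul_sum, hsqr, mul_one, hEr]
    nlinarith [this]
  rcases eq_or_lt_of_le hr with heq | hlt
  · have : Er = E := by
      rw [hEr, hE]
      refine Finset.sum_congr rfl fun y _ => ?_
      have hq1 : qr y = q y := by
        simp only [hqrdef, hZdef, ← heq, Real.rpow_one, hsq, div_one]
      rw [hq1]
    linarith
  · have h1 : (r - 1) * E ≤ Real.log Z := by linarith
    have h2 : Real.log Z ≤ (r - 1) * Er := by linarith
    have : E ≤ Er := le_of_mul_le_mul_left (by linarith) (by linarith : 0 < r - 1)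
    linarith

/-- The Shannon entropy of the tempered distribution π_β(y) ∝ p(y)^{1/β} is a
non-decreasing function of β on (0, ∞). -/
theorem stmt_12 {I : Type*} [Fintype I] [Nonempty I]
    (p : I → ℝ) (hp : ∀ y, 0 < p y) (hpsum : ∑ y, p y = 1) :
    let πβ : ℝ → I → ℝ := fun β y => p y ^ (1 / β) / ∑ z, p z ^ (1 / β)
    let H : ℝ → ℝ := fun β => -∑ y, πβ β y * Real.log (πβ β y)
    MonotoneOn H (Set.Ioi (0 : ℝ)) := by
  intro πβ H
  intro β1 hβ1 β2 hβ2 hle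
  have hb1 : (0:ℝ) < β1 := hβ1
  have hb2 : (0:ℝ) < β2 := hβ2
  set r : ℝ := β2 / β1 with hrdef
  have hr : 1 ≤ r := (one_le_div hb1).mpr hle
  set q : I → ℝ := πβ β2 with hqdef
  have hZ2 : 0 < ∑ z, p z ^ (1 / β2) :=
    Finset.sum_pos (fun z _ => Real.rpow_pos_of_pos (hp z) _) Finset.univ_nonempty
  have hZ1 : 0 < ∑ z, p z ^ (1 / β1) :=
    Finset.sum_pos (fun z _ => Real.rpow_pos_of_pos (hp z) _) Finset.univ_nonempty
  have hqpos : ∀ y, 0 < q y := fun y =>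
    div_pos (Real.rpow_pos_of_pos (hp y) _) hZ2
  have hsq : ∑ y, q y = 1 := by
    rw [hqdef]; simp only [πβ]; rw [← Finset.sum_div]; exact div_self hZ2.ne'
  -- pointwise: q y ^ r = p y ^ (1/β1) / (∑ p ^ (1/β2)) ^ r
  have hpow : ∀ y : I, q y ^ r = p y ^ (1 / β1) / (∑ z, p z ^ (1 / β2)) ^ r := by
    intro y
    rw [hqdef]
    simp only [πβ]
    rw [Real.div_rpow (Real.rpow_pos_of_pos (hp y) _).le hZ2.le,
      ← Real.rpow_mul (hp y).le]
    congr 2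
    rw [hrdef]
    field_simp
  have hZr : ∑ z, q z ^ r = (∑ z, p z ^ (1 / β1)) / (∑ z, p z ^ (1 / β2)) ^ r := by
    rw [show (∑ z, q z ^ r) = ∑ z, p z ^ (1 / β1) / (∑ z, p z ^ (1 / β2)) ^ r from
      Finset.sum_congr rfl fun z _ => hpow z, ← Finset.sum_div]
  have hescort : ∀ y : I, πβ β1 y = q y ^ r / ∑ z, q z ^ r := by
    intro y
    rw [hpow y, hZr]
    have hZ2r : (0:ℝ) < (∑ z, p z ^ (1 / β2)) ^ r := Real.rpow_pos_of_pos hZ2 r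
    simp only [πβ]
    rw [div_div_div_eq, mul_comm (p y ^ (1 / β1)) _, mul_div_mul_left _ _ hZ2r.ne']
  have := escort_ent q hqpos hsq r hr
  have hH1 : H β1 = -∑ y, (q y ^ r / ∑ z, q z ^ r) * Real.log (q y ^ r / ∑ z, q z ^ r) := by
    simp only [H]
    congr 1
    exact Finset.sum_congr rfl fun y _ => by rw [hescort y]
  rw [hH1]
  exact this
end
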